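/- arXiv:1903.09821 — 3 statements merged into one kernel-verified Lean document; each statement's English description precedes it below -/
import Mathlib

section
/- Let R be a (possibly noncommutative) ring, and let D, P, Q, S be elements of R satisfying the relations: (i) [D,P]·P = P·[D,P] − Q, (ii) Q·P − P·Q = S, and (iii) S·P = P·S, where [D,P] = D·P − P·D. Then for every natural number k ≥ 1, [D, P^k] = k·P^{k−1}·[D,P] − (k(k−1)/2)·P^{k−2}·Q − (k(k−1)(k−2)/6)·P^{k−3}·S, where terms with negative exponents of P are interpreted as zero (i.e. the Q-term vanishes for k ≤ 1 and the S-term vanishes for k ≤ 2). -/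
private lemma two_mul_choose_two (n : ℕ) : 2 * n.choose 2 = n * (n - 1) := by
  induction n with
  | zero => rfl
  | succ m ih =>
    rw [Nat.choose_succ_succ, Nat.mul_add, ih, Nat.choose_one_right]
    cases m with
    | zero => rfl
    | succ l =>
      rw [show l+1+1-1 = l+1 from rfl, show l+1-1 = l from rfl]
      ring

private lemma six_mul_choose_three (n : ℕ) : 6 * n.choose 3 = n * (n - 1) * (n - 2) := by
  induction n with
  | zero => rfl
  | succ m ih =>
    rw [Nat.choose_succ_succ, Nat.mul_add, ih]
    match m with
    | 0 => rfl
    | 1 => rfl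
    | (l+2) =>
      have h2 : 6 * (l+2).choose 2 = 3 * ((l+2) * (l+1)) := by
        have := two_mul_choose_two (l+2)
        rw [show l+2-1 = l+1 from rfl] at this
        omega
      rw [h2, show l+2-1 = l+1 from rfl, show l+2-2 = l from rfl,
          show l+2+1-1 = l+2 from rfl, show l+2+1-2 = l+1 from rfl]
      ring

private lemma aux_formula {R : Type*} [Ring R] (D P Q S : R)
    (h1 : (D * P - P * D) * P = P * (D * P - P * D) - Q)
    (h2 : Q * P - P * Q = S)
    (h3 : S * P = P * S) :
    ∀ n : ℕ,
      D * P ^ (n + 1) - P ^ (n + 1) * D =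
        (n + 1) • (P ^ n * (D * P - P * D))
          - ((n + 1).choose 2) • (P ^ (n - 1) * Q)
          - ((n + 1).choose 3) • (P ^ (n - 2) * S) := by
  have h2' : Q * P = P * Q + S := by rw [← h2]; noncomm_ring
  intro n
  induction n with
  | zero => simp [Nat.choose]
  | succ m ih =>
    have e : D * P ^ (m + 1 + 1) - P ^ (m + 1 + 1) * D
        = (D * P ^ (m + 1) - P ^ (m + 1) * D) * P + P ^ (m + 1) * (D * P - P * D) := by
      noncomm_ring
    rw [e, ih]
    match m with
    | 0 =>
      norm_num [Nat.choose]
      rw [h1]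
      noncomm_ring
    | 1 =>
      norm_num [Nat.choose]
      rw [sub_mul, h2', mul_assoc 2, mul_assoc P, h1]
      noncomm_ring
    | (l+2) =>
      rw [show l+2-1 = l+1 from rfl, show l+2-2 = l from rfl,
          show l+2+1-1 = l+2 from rfl, show l+2+1-2 = l+1 from rfl,
          show (l+2+1+1).choose 2 = (l+3) + (l+3).choose 2 by
            rw [Nat.choose_succ_succ, Nat.choose_one_right],
          show (l+2+1+1).choose 3 = (l+3).choose 2 + (l+3).choose 3 by
            rw [Nat.choose_succ_succ]]
      rw [show (l+2+1).choose 2 = (l+3).choose 2 from rfl, show (l+2+1).choose 3 = (l+3).choose 3 from rfl]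
      generalize (l+3).choose 2 = a
      generalize (l+3).choose 3 = b
      simp only [sub_mul, smul_mul_assoc, mul_assoc, h1, h2', h3]
      simp only [mul_sub, mul_add, smul_sub, smul_add, add_smul]
      have p1 : ∀ x : R, P ^ (l + 2) * (P * x) = P ^ (l + 2 + 1) * x := fun x => by
        rw [← mul_assoc, ← pow_succ]
      have p2 : ∀ x : R, P ^ (l + 1) * (P * x) = P ^ (l + 2) * x := fun x => by
        rw [← mul_assoc, ← pow_succ]
      have p3 : ∀ x : R, P ^ l * (P * x) = P ^ (l + 1) * x := fun x => by
        rw [← mul_assoc, ← pow_succ]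
      simp only [p1, p2, p3]
      abel

/-- Abstract commutator formula: if `[D,P]·P = P·[D,P] − Q`, `Q·P − P·Q = S` and
`S·P = P·S`, then for every `k ≥ 1`,
`[D, P^k] = k·P^(k−1)·[D,P] − (k(k−1)/2)·P^(k−2)·Q − (k(k−1)(k−2)/6)·P^(k−3)·S`
(the `Q`- and `S`-terms vanishing for small `k` since their coefficients are `0`). -/

theorem commutator_pow_formula {R : Type*} [Ring R] (D P Q S : R)
    (h1 : (D * P - P * D) * P = P * (D * P - P * D) - Q)
    (h2 : Q * P - P * Q = S)
    (h3 : S * P = P * S) :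
    ∀ k : ℕ, 1 ≤ k →
      D * P ^ k - P ^ k * D =
        k • (P ^ (k - 1) * (D * P - P * D))
          - (k * (k - 1) / 2) • (P ^ (k - 2) * Q)
          - (k * (k - 1) * (k - 2) / 6) • (P ^ (k - 3) * S) := by
  intro k hk
  obtain ⟨n, rfl⟩ := Nat.exists_eq_add_of_le' hk
  have c2 : (n + 1) * (n + 1 - 1) / 2 = (n + 1).choose 2 := by
    have := two_mul_choose_two (n + 1)
    omega
  have c3 : (n + 1) * (n + 1 - 1) * (n + 1 - 2) / 6 = (n + 1).choose 3 := by
    have := six_mul_choose_three (n + 1)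
    generalize (n + 1) * (n + 1 - 1) * (n + 1 - 2) = x at *
    omega
  rw [c2, c3, show n + 1 - 1 = n from rfl, show n + 1 - 2 = n - 1 from rfl,
      show n + 1 - 3 = n - 2 from rfl]
  exact aux_formula D P Q S h1 h2 h3 n
end

section
/- Let R be a ring (e.g. an algebra of operators), and let D, P, Q, S ∈ R satisfy: (i) [D,P]·P = P·[D,P] − Q, (ii) Q·P − P·Q = S, (iii) S·P = P·S, and suppose P is nilpotent, so that e^P := Σ_{k≥0} P^k/k! is a finite sum (assume R is a ℚ-algebra). Then e^{−P} · D · e^{P} = D + [D,P] − (1/2)Q − (1/6)S. -/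
private lemma ext_coeff (n i : ℕ) (h : i ≤ n) :
    ((n.factorial : ℚ))⁻¹ * (n.choose i : ℚ) =
      ((i.factorial : ℚ))⁻¹ * (((n - i).factorial : ℚ))⁻¹ := by
  have h0 := Nat.choose_mul_factorial_mul_factorial h
  have h1 : ((n.choose i : ℚ)) * (i.factorial : ℚ) * ((n - i).factorial : ℚ)
      = (n.factorial : ℚ) := by exact_mod_cast congrArg (Nat.cast : ℕ → ℚ) h0
  have f1 : (n.factorial : ℚ) ≠ 0 := Nat.cast_ne_zero.2 n.factorial_ne_zero
  have f2 : (i.factorial : ℚ) ≠ 0 := Nat.cast_ne_zero.2 i.factorial_ne_zero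
  have f3 : (((n - i).factorial : ℚ)) ≠ 0 := Nat.cast_ne_zero.2 (n - i).factorial_ne_zero
  field_simp
  linear_combination h1

private lemma ext_alt (n : ℕ) :
    (∑ i ∈ Finset.range (n + 1),
      (-1 : ℚ) ^ i * ((i.factorial : ℚ))⁻¹ * (((n - i).factorial : ℚ))⁻¹)
      = if n = 0 then 1 else 0 := by
  have key : ∀ i ∈ Finset.range (n + 1),
      (-1 : ℚ) ^ i * ((i.factorial : ℚ))⁻¹ * (((n - i).factorial : ℚ))⁻¹
        = ((n.factorial : ℚ))⁻¹ * ((-1 : ℚ) ^ i * (n.choose i : ℚ)) := by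
    intro i hi
    rw [mul_assoc, ← ext_coeff n i (Nat.lt_succ_iff.1 (Finset.mem_range.1 hi))]
    ring
  rw [Finset.sum_congr rfl key, ← Finset.mul_sum]
  have h2 : (∑ i ∈ Finset.range (n + 1), (-1 : ℚ) ^ i * (n.choose i : ℚ))
      = if n = 0 then 1 else 0 := by
    have := Int.alternating_sum_range_choose (n := n)
    have h3 := congrArg (fun z : ℤ => (z : ℚ)) this
    push_cast at h3
    simpa using h3
  rw [h2]
  rcases eq_or_ne n 0 with hn | hn <;> simp [hn]

/-- Abstract extension formula: under the commutation relations
`[D,P]·P = P·[D,P] − Q`, `Q·P − P·Q = S`, `S·P = P·S`, and with `P` nilpotent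
(`P^N = 0`), one has `e^{−P}·D·e^{P} = D + [D,P] − (1/2)Q − (1/6)S`, where
`e^{±P}` are the (finite) exponential sums. -/
theorem extension_formula {R : Type*} [Ring R] [Algebra ℚ R] (D P Q S : R)
    (h1 : (D * P - P * D) * P = P * (D * P - P * D) - Q)
    (h2 : Q * P - P * Q = S)
    (h3 : S * P = P * S)
    (N : ℕ) (hP : P ^ N = 0) :
    (∑ k ∈ Finset.range N, ((k.factorial : ℚ))⁻¹ • (-P) ^ k) * D *
      (∑ k ∈ Finset.range N, ((k.factorial : ℚ))⁻¹ • P ^ k)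
      = D + (D * P - P * D) - (1 / 2 : ℚ) • Q - (1 / 6 : ℚ) • S := by
  -- trivial case N = 0 : the ring is trivial
  rcases Nat.eq_zero_or_pos N with hN0 | hNpos
  · subst hN0
    have h10 : (1 : R) = 0 := by simpa using hP
    have hall : ∀ x : R, x = 0 := fun x => by rw [← mul_one x, h10, mul_zero]
    rw [hall ((∑ k ∈ Finset.range 0, ((k.factorial : ℚ))⁻¹ • (-P) ^ k) * D *
      (∑ k ∈ Finset.range 0, ((k.factorial : ℚ))⁻¹ • P ^ k)),
      hall (D + (D * P - P * D) - (1 / 2 : ℚ) • Q - (1 / 6 : ℚ) • S)]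
  -- powers of P vanish from N on
  have hPk : ∀ k, N ≤ k → P ^ k = 0 := by
    intro k hk
    rw [← Nat.sub_add_cancel hk, pow_add, hP, mul_zero]
  -- the exponential sum is independent of the truncation point ≥ N
  set E : R := ∑ k ∈ Finset.range N, ((k.factorial : ℚ))⁻¹ • P ^ k with hE
  have tail : ∀ M, N ≤ M → (∑ k ∈ Finset.range M, ((k.factorial : ℚ))⁻¹ • P ^ k) = E := by
    intro M hM
    rw [hE]
    refine (Finset.sum_subset (Finset.range_subset_range.2 hM) ?_).symm
    intro k _ hk
    rw [hPk k (le_of_not_gt fun h => hk (Finset.mem_range.2 h)), smul_zero]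
  -- the adjoint-action endomorphism
  set L : Module.End ℚ R := LinearMap.mulLeft ℚ P with hL
  set δ : Module.End ℚ R := LinearMap.mulRight ℚ P - LinearMap.mulLeft ℚ P with hδ
  have hRL : LinearMap.mulRight ℚ P = L + δ := by rw [hL, hδ]; abel
  have hcomm : Commute L δ := by
    rw [hL, hδ]
    refine LinearMap.ext fun x => ?_
    simp only [Module.End.mul_apply, LinearMap.sub_apply, LinearMap.mulLeft_apply,
      LinearMap.mulRight_apply]
    simp only [mul_sub, sub_mul, mul_assoc]
  -- iterated brackets of D
  set dd : ℕ → R := fun m => (δ ^ m) D with hdd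
  have hd0 : dd 0 = D := by rw [hdd]; simp
  have hδD : δ D = D * P - P * D := by
    rw [hδ]; simp [LinearMap.sub_apply]
  have hδC : δ (D * P - P * D) = -Q := by
    rw [hδ]
    simp only [LinearMap.sub_apply, LinearMap.mulLeft_apply, LinearMap.mulRight_apply]
    rw [h1]; abel
  have hδQ : δ (-Q) = -S := by
    rw [hδ]
    simp only [LinearMap.sub_apply, LinearMap.mulLeft_apply, LinearMap.mulRight_apply]
    rw [neg_mul, mul_neg, ← h2]; abel
  have hδS : δ (-S) = 0 := by
    rw [hδ]
    simp only [LinearMap.sub_apply, LinearMap.mulLeft_apply, LinearMap.mulRight_apply]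
    rw [neg_mul, mul_neg, h3]; abel
  have hd1 : dd 1 = D * P - P * D := by rw [hdd]; simpa using hδD
  have hd2 : dd 2 = -Q := by
    rw [hdd]
    show (δ ^ 2) D = -Q
    rw [pow_two, Module.End.mul_apply, hδD, hδC]
  have hd3 : dd 3 = -S := by
    rw [hdd]
    show (δ ^ 3) D = -S
    rw [pow_succ, Module.End.mul_apply, pow_two, Module.End.mul_apply, hδD, hδC, hδQ]
  have hd4 : ∀ m, 4 ≤ m → dd m = 0 := by
    intro m hm
    obtain ⟨t, rfl⟩ := Nat.exists_eq_add_of_le hm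
    rw [hdd]
    show (δ ^ (4 + t)) D = 0
    rw [add_comm, pow_add, Module.End.mul_apply]
    have : (δ ^ 4) D = 0 := by
      rw [pow_succ, Module.End.mul_apply, pow_succ, Module.End.mul_apply, pow_two,
        Module.End.mul_apply, hδD, hδC, hδQ, hδS]
    rw [this, map_zero]
  -- binomial-type expansion of D * P^n
  have happly : ∀ n, D * P ^ n =
      ∑ i ∈ Finset.range (n + 1), (n.choose i) • (P ^ i * dd (n - i)) := by
    intro n
    have e1 : D * P ^ n = ((LinearMap.mulRight ℚ P) ^ n) D := by
      rw [LinearMap.pow_mulRight, LinearMap.mulRight_apply]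
    rw [e1, hRL, hcomm.add_pow n]
    rw [LinearMap.sum_apply]
    refine Finset.sum_congr rfl fun i _ => ?_
    rw [Module.End.mul_apply, Module.End.mul_apply, Module.End.natCast_apply,
      map_nsmul, map_nsmul]
    congr 1
    rw [hdd, LinearMap.pow_mulLeft, LinearMap.mulLeft_apply]
  -- the triangular summand
  set F : ℕ → ℕ → R := fun i m =>
    (((i.factorial : ℚ))⁻¹ * ((m.factorial : ℚ))⁻¹) • (P ^ i * dd m) with hF
  -- key identity : D * E = E * X
  set X : R := D + (D * P - P * D) - (1 / 2 : ℚ) • Q - (1 / 6 : ℚ) • S with hX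
  have claim1 : D * E = E * X := by
    have c1 : D * E = ∑ n ∈ Finset.range (N + 4), ∑ i ∈ Finset.range (n + 1),
        F (n - i) i := by
      rw [← tail (N + 4) (by omega), Finset.mul_sum]
      refine Finset.sum_congr rfl fun n _ => ?_
      rw [mul_smul_comm, happly n, Finset.smul_sum]
      have refl1 : ∑ i ∈ Finset.range (n + 1), F (n - i) i
          = ∑ i ∈ Finset.range (n + 1), F (n - (n - i)) (n - i) := by
        exact (Finset.sum_range_reflect (fun i => F (n - i) i) (n + 1)).symm
      rw [refl1]
      refine Finset.sum_congr rfl fun i hi => ?_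
      have hi' : i ≤ n := Nat.lt_succ_iff.1 (Finset.mem_range.1 hi)
      rw [Nat.sub_sub_self hi', hF]
      show ((n.factorial : ℚ))⁻¹ • (n.choose i) • (P ^ i * dd (n - i)) = _
      rw [← Nat.cast_smul_eq_nsmul ℚ (n.choose i), smul_smul, ext_coeff n i hi']
    rw [c1, Finset.sum_range_diag_flip (N + 4) (fun i m => F m i)]
    have trim : ∀ m ∈ Finset.range (N + 4), m ∉ Finset.range 4 →
        (∑ k ∈ Finset.range (N + 4 - m), F k m) = 0 := by
      intro m _ hm
      have h4 : 4 ≤ m := le_of_not_gt fun h => hm (Finset.mem_range.2 h)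
      refine Finset.sum_eq_zero fun k _ => ?_
      rw [hF]
      show (_ : ℚ) • (P ^ k * dd m) = 0
      rw [hd4 m h4, mul_zero, smul_zero]
    rw [← Finset.sum_subset (Finset.range_subset_range.2 (by omega : 4 ≤ N + 4)) trim]
    have inner : ∀ m, m < 4 → (∑ k ∈ Finset.range (N + 4 - m), F k m)
        = E * (((m.factorial : ℚ))⁻¹ • dd m) := by
      intro m hm
      have : ∀ k, F k m = (((k.factorial : ℚ))⁻¹ • P ^ k) *
          (((m.factorial : ℚ))⁻¹ • dd m) := by
        intro k
        rw [hF]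
        show (_ * _ : ℚ) • (P ^ k * dd m) = _
        rw [smul_mul_assoc, mul_smul_comm, smul_smul]
      rw [Finset.sum_congr rfl fun k _ => this k, ← Finset.sum_mul,
        tail (N + 4 - m) (by omega)]
    rw [Finset.sum_congr rfl fun m hm => inner m (Finset.mem_range.1 hm), ← Finset.mul_sum]
    congr 1
    rw [hX]
    rw [Finset.sum_range_succ, Finset.sum_range_succ, Finset.sum_range_succ,
      Finset.sum_range_one, hd0, hd1, hd2, hd3]
    norm_num [Nat.factorial]
    abel
  -- e^{-P} * e^{P} = 1
  have claim2 : (∑ k ∈ Finset.range N, ((k.factorial : ℚ))⁻¹ • (-P) ^ k) * E = 1 := by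
    set G : ℕ → ℕ → R := fun i j =>
      ((-1 : ℚ) ^ i * ((i.factorial : ℚ))⁻¹ * ((j.factorial : ℚ))⁻¹) • P ^ (i + j) with hG
    have hneg : ∀ i : ℕ, ((i.factorial : ℚ))⁻¹ • (-P) ^ i
        = ((-1 : ℚ) ^ i * ((i.factorial : ℚ))⁻¹) • P ^ i := by
      intro i
      have : (-P) = (-1 : ℚ) • P := by rw [neg_smul, one_smul]
      rw [this, smul_pow, smul_smul, mul_comm]
    have expand : (∑ k ∈ Finset.range N, ((k.factorial : ℚ))⁻¹ • (-P) ^ k) * E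
        = ∑ i ∈ Finset.range N, ∑ j ∈ Finset.range N, G i j := by
      rw [hE, Finset.sum_mul]
      refine Finset.sum_congr rfl fun i _ => ?_
      rw [Finset.mul_sum]
      refine Finset.sum_congr rfl fun j _ => ?_
      rw [hneg i, hG]
      show _ = ((-1 : ℚ) ^ i * (↑i.factorial)⁻¹ * (↑j.factorial)⁻¹) • P ^ (i + j)
      rw [smul_mul_assoc, mul_smul_comm, smul_smul, pow_add]
    have trim2 : ∀ i ∈ Finset.range N, (∑ j ∈ Finset.range N, G i j)
        = ∑ j ∈ Finset.range (N - i), G i j := by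
      intro i hi
      refine (Finset.sum_subset (Finset.range_subset_range.2 (by omega)) ?_).symm
      intro j _ hj
      have : N ≤ i + j := by
        have := Finset.mem_range.1 (show j ∈ Finset.range N from ‹j ∈ Finset.range N›)
        have hj' : N - i ≤ j := le_of_not_gt fun h => hj (Finset.mem_range.2 h)
        omega
      rw [hG]
      show (_ : ℚ) • P ^ (i + j) = 0
      rw [hPk _ this, smul_zero]
    rw [expand, Finset.sum_congr rfl trim2, ← Finset.sum_range_diag_flip N G]
    have inner2 : ∀ n ∈ Finset.range N, (∑ i ∈ Finset.range (n + 1), G i (n - i))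
        = if n = 0 then 1 else 0 := by
      intro n _
      have step : ∀ i ∈ Finset.range (n + 1), G i (n - i)
          = ((-1 : ℚ) ^ i * ((i.factorial : ℚ))⁻¹ * (((n - i).factorial : ℚ))⁻¹) • P ^ n := by
        intro i hi
        have hi' : i ≤ n := Nat.lt_succ_iff.1 (Finset.mem_range.1 hi)
        rw [hG]
        show (_ : ℚ) • P ^ (i + (n - i)) = _
        rw [Nat.add_sub_cancel' hi']
      rw [Finset.sum_congr rfl step, ← Finset.sum_smul, ext_alt n]
      rcases eq_or_ne n 0 with hn | hn <;> simp [hn]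
    rw [Finset.sum_congr rfl inner2, Finset.sum_ite_eq' (Finset.range N) 0 (fun _ => (1 : R))]
    simp [Finset.mem_range.2 hNpos]
  calc (∑ k ∈ Finset.range N, ((k.factorial : ℚ))⁻¹ • (-P) ^ k) * D * E
      = (∑ k ∈ Finset.range N, ((k.factorial : ℚ))⁻¹ • (-P) ^ k) * (D * E) := by
        rw [mul_assoc]
    _ = (∑ k ∈ Finset.range N, ((k.factorial : ℚ))⁻¹ • (-P) ^ k) * (E * X) := by rw [claim1]
    _ = ((∑ k ∈ Finset.range N, ((k.factorial : ℚ))⁻¹ • (-P) ^ k) * E) * X := by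
        rw [mul_assoc]
    _ = X := by rw [claim2, one_mul]
end

section
/- Let φ be an n×n complex matrix with φᵀ = −φ and let φ* be its conjugate transpose. Then det(Iₙ − φ·φ̄) = ∏ᵢ (1 + λᵢ) where λ₁,…,λₙ are the (real, nonnegative) eigenvalues of the positive semidefinite Hermitian matrix φ·φ*; in particular det(Iₙ − φ·φ̄) ≥ 1 and Iₙ − φ·φ̄ is invertible. -/
open Matrix ComplexOrder

/-- If `φᵀ = −φ`, then `det (I − φ·φ̄) = ∏ᵢ (1 + λᵢ)` where the `λᵢ` are the real
eigenvalues of the Hermitian matrix `φ·φ*`; in particular `det (I − φ·φ̄) ≥ 1`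
and `I − φ·φ̄` is invertible. -/
theorem det_one_sub_phi_conj_of_antisymm (n : ℕ) (φ : Matrix (Fin n) (Fin n) ℂ)
    (hφ : φᵀ = -φ) :
    (1 - φ * φ.map (starRingEnd ℂ)).det
        = ∏ i, (1 + ((Matrix.isHermitian_mul_conjTranspose_self φ).eigenvalues i : ℂ)) ∧
    (1 : ℂ) ≤ (1 - φ * φ.map (starRingEnd ℂ)).det ∧
    IsUnit (1 - φ * φ.map (starRingEnd ℂ)) := by
  set hA := Matrix.isHermitian_mul_conjTranspose_self φ with hhA
  have hmap : φ.map (starRingEnd ℂ) = -φᴴ := by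
    rw [conjTranspose, hφ]
    ext i j
    simp [Matrix.map_apply]
  have key : (1 : Matrix (Fin n) (Fin n) ℂ) - φ * φ.map (starRingEnd ℂ) = 1 + φ * φᴴ := by
    rw [hmap, mul_neg, sub_neg_eq_add]
  have hU := hA.spectral_theorem
  set U : Matrix (Fin n) (Fin n) ℂ := (hA.eigenvectorUnitary : Matrix (Fin n) (Fin n) ℂ)
  have hUU : U * star U = 1 := (Matrix.mem_unitaryGroup_iff).mp hA.eigenvectorUnitary.2
  have hdecomp : (1 : Matrix (Fin n) (Fin n) ℂ) + φ * φᴴ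
      = U * (1 + diagonal (RCLike.ofReal ∘ hA.eigenvalues)) * star U := by
    rw [mul_add, add_mul, mul_one, hUU]
    exact congrArg (1 + ·) hU
  have hdet : (1 - φ * φ.map (starRingEnd ℂ)).det
      = ∏ i, (1 + (hA.eigenvalues i : ℂ)) := by
    rw [key, hdecomp, det_mul_right_comm, hUU, one_mul]
    have : (1 : Matrix (Fin n) (Fin n) ℂ) + diagonal (RCLike.ofReal ∘ hA.eigenvalues)
        = diagonal (fun i => 1 + (hA.eigenvalues i : ℂ)) := by
      rw [← diagonal_one, diagonal_add]
      rfl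
    rw [this, det_diagonal]
  refine ⟨hdet, ?_, ?_⟩
  · have hnn : ∀ i, 0 ≤ hA.eigenvalues i := fun i =>
      (Matrix.posSemidef_self_mul_conjTranspose φ).eigenvalues_nonneg i
    have : (∏ i, (1 + (hA.eigenvalues i : ℂ))) = ((∏ i, (1 + hA.eigenvalues i) : ℝ) : ℂ) := by
      push_cast; ring_nf
    rw [hdet, this]
    have h1 : (1 : ℝ) ≤ ∏ i, (1 + hA.eigenvalues i) := by
      calc (1:ℝ) = ∏ _i : Fin n, (1:ℝ) := by simp
        _ ≤ ∏ i, (1 + hA.eigenvalues i) :=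
          Finset.prod_le_prod (fun i _ => zero_le_one) (fun i _ => by linarith [hnn i])
    exact_mod_cast h1
  · rw [Matrix.isUnit_iff_isUnit_det, isUnit_iff_ne_zero, hdet]
    refine Finset.prod_ne_zero_iff.mpr fun i _ => ?_
    have hnn : 0 ≤ hA.eigenvalues i :=
      (Matrix.posSemidef_self_mul_conjTranspose φ).eigenvalues_nonneg i
    intro h
    have : (1 + hA.eigenvalues i : ℝ) = 0 := by exact_mod_cast h
    linarith
end
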